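/- arXiv:2406.00328 — 5 statements merged into one kernel-verified Lean document; each statement's English description precedes it below -/
import Mathlib

section
/- Let p ∈ [1, 2], let m ≥ 1, let w ∈ ℝ^m be a weight vector with w_i ≥ 1 for all i, and let y, y' ∈ ℝ^m. Then (∑_{i=1}^m w_i^2·(|y_i|^p − |y_i'|^p)^2)^{1/2} ≤ ( 2·(∑_{i=1}^m w_i|y_i|^p + ∑_{i=1}^m w_i|y_i'|^p) · max_{i ∈ [m]} w_i·|y_i − y_i'|^p )^{1/2}. -/
private lemma real_rpow_add_le_add_rpow {q : ℝ} (a b : ℝ) (ha : 0 ≤ a) (hb : 0 ≤ b)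
    (hq : 0 ≤ q) (hq1 : q ≤ 1) : (a + b) ^ q ≤ a ^ q + b ^ q := by
  have h := NNReal.rpow_add_le_add_rpow a.toNNReal b.toNNReal hq hq1
  have h2 := NNReal.coe_le_coe.mpr h
  simpa [NNReal.coe_rpow, Real.coe_toNNReal _ ha, Real.coe_toNNReal _ hb,
    Real.coe_toNNReal _ (add_nonneg ha hb)] using h2

private lemma sub_rpow_le_rpow_sub {q : ℝ} (x y : ℝ) (hy : 0 ≤ y) (hxy : y ≤ x)
    (hq : 0 ≤ q) (hq1 : q ≤ 1) : x ^ q - y ^ q ≤ (x - y) ^ q := by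
  have h := real_rpow_add_le_add_rpow (x - y) y (by linarith) hy hq hq1
  rw [sub_add_cancel] at h
  linarith

private lemma key_aux (p : ℝ) (hp1 : 1 ≤ p) (hp2 : p ≤ 2) (a b : ℝ) (hab : |b| ≤ |a|) :
    (|a| ^ p - |b| ^ p) ^ 2 ≤ 2 * (|a| ^ p + |b| ^ p) * |a - b| ^ p := by
  set q : ℝ := p / 2 with hqdef
  have hq : 0 ≤ q := by positivity
  have hq1 : q ≤ 1 := by rw [hqdef]; linarith
  set x := |a| with hx
  set z := |b| with hz
  have hx0 : 0 ≤ x := abs_nonneg a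
  have hz0 : 0 ≤ z := abs_nonneg b
  have hxp : x ^ p = (x ^ q) ^ 2 := by
    rw [← Real.rpow_natCast (x ^ q) 2, ← Real.rpow_mul hx0]
    norm_num [hqdef]
  have hzp : z ^ p = (z ^ q) ^ 2 := by
    rw [← Real.rpow_natCast (z ^ q) 2, ← Real.rpow_mul hz0]
    norm_num [hqdef]
  have hq_mono : z ^ q ≤ x ^ q := Real.rpow_le_rpow hz0 hab hq
  have hqx0 : 0 ≤ x ^ q := Real.rpow_nonneg hx0 q
  have hqz0 : 0 ≤ z ^ q := Real.rpow_nonneg hz0 q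
  -- x^q - z^q ≤ |a-b|^q
  have h1 : x ^ q - z ^ q ≤ |a - b| ^ q := by
    calc x ^ q - z ^ q ≤ (x - z) ^ q := sub_rpow_le_rpow_sub x z hz0 hab hq hq1
    _ ≤ |a - b| ^ q := by
        apply Real.rpow_le_rpow (by linarith) ?_ hq
        exact abs_sub_abs_le_abs_sub a b
  have habsp : |a - b| ^ p = (|a - b| ^ q) ^ 2 := by
    rw [← Real.rpow_natCast (|a - b| ^ q) 2, ← Real.rpow_mul (abs_nonneg _)]
    norm_num [hqdef]
  have h1sq : (x ^ q - z ^ q) ^ 2 ≤ |a - b| ^ p := by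
    rw [habsp]
    exact pow_le_pow_left₀ (by linarith) h1 2
  have h2 : (x ^ q + z ^ q) ^ 2 ≤ 2 * (x ^ p + z ^ p) := by
    rw [hxp, hzp]; nlinarith [sq_nonneg (x ^ q - z ^ q)]
  have hfactor : (x ^ p - z ^ p) ^ 2 = (x ^ q - z ^ q) ^ 2 * (x ^ q + z ^ q) ^ 2 := by
    rw [hxp, hzp]; ring
  calc (x ^ p - z ^ p) ^ 2 = (x ^ q - z ^ q) ^ 2 * (x ^ q + z ^ q) ^ 2 := hfactor
  _ ≤ |a - b| ^ p * (2 * (x ^ p + z ^ p)) :=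
      mul_le_mul h1sq h2 (sq_nonneg _) (Real.rpow_nonneg (abs_nonneg _) p)
  _ = 2 * (x ^ p + z ^ p) * |a - b| ^ p := by ring

private lemma key (p : ℝ) (hp1 : 1 ≤ p) (hp2 : p ≤ 2) (a b : ℝ) :
    (|a| ^ p - |b| ^ p) ^ 2 ≤ 2 * (|a| ^ p + |b| ^ p) * |a - b| ^ p := by
  rcases le_total (|b|) (|a|) with hab | hab
  · exact key_aux p hp1 hp2 a b hab
  · have h := key_aux p hp1 hp2 b a hab
    have e1 : (|a| ^ p - |b| ^ p) ^ 2 = (|b| ^ p - |a| ^ p) ^ 2 := by ring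
    have e2 : |a - b| = |b - a| := abs_sub_comm a b
    rw [e1, e2]
    calc (|b| ^ p - |a| ^ p) ^ 2 ≤ 2 * (|b| ^ p + |a| ^ p) * |b - a| ^ p := h
    _ = 2 * (|a| ^ p + |b| ^ p) * |b - a| ^ p := by ring

/-- Weighted diameter-type bound for `h(r) = |r|^p`, `p ∈ [1,2]`. -/
theorem stmt5 (p : ℝ) (hp1 : 1 ≤ p) (hp2 : p ≤ 2) (m : ℕ) (hm : 0 < m)
    (w : Fin m → ℝ) (hw : ∀ i, 1 ≤ w i) (y y' : Fin m → ℝ) :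
    Real.sqrt (∑ i, (w i) ^ 2 * (|y i| ^ p - |y' i| ^ p) ^ 2) ≤
      Real.sqrt (2 * ((∑ i, w i * |y i| ^ p) + ∑ i, w i * |y' i| ^ p) *
        Finset.univ.sup' (Finset.univ_nonempty_iff.mpr ⟨⟨0, hm⟩⟩)
          (fun i => w i * |y i - y' i| ^ p)) := by
  apply Real.sqrt_le_sqrt
  set M := Finset.univ.sup' (Finset.univ_nonempty_iff.mpr ⟨⟨0, hm⟩⟩)
      (fun i => w i * |y i - y' i| ^ p) with hM
  have hM0 : 0 ≤ M := by
    have h0 : (0:ℝ) ≤ w ⟨0, hm⟩ * |y ⟨0, hm⟩ - y' ⟨0, hm⟩| ^ p :=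
      mul_nonneg (le_trans zero_le_one (hw ⟨0, hm⟩)) (Real.rpow_nonneg (abs_nonneg _) p)
    exact le_trans h0
      (Finset.le_sup' (fun i => w i * |y i - y' i| ^ p) (Finset.mem_univ (⟨0, hm⟩ : Fin m)))
  have hMi : ∀ i, w i * |y i - y' i| ^ p ≤ M := fun i =>
    Finset.le_sup' (fun i => w i * |y i - y' i| ^ p) (Finset.mem_univ i)
  have hterm : ∀ i, (w i) ^ 2 * (|y i| ^ p - |y' i| ^ p) ^ 2 ≤
      2 * (w i * |y i| ^ p + w i * |y' i| ^ p) * M := by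
    intro i
    have hwi : (0:ℝ) < w i := lt_of_lt_of_le zero_lt_one (hw i)
    have hk := key p hp1 hp2 (y i) (y' i)
    have hS : 0 ≤ |y i| ^ p + |y' i| ^ p :=
      add_nonneg (Real.rpow_nonneg (abs_nonneg _) p) (Real.rpow_nonneg (abs_nonneg _) p)
    calc (w i) ^ 2 * (|y i| ^ p - |y' i| ^ p) ^ 2
        ≤ (w i) ^ 2 * (2 * (|y i| ^ p + |y' i| ^ p) * |y i - y' i| ^ p) := by
          exact mul_le_mul_of_nonneg_left hk (sq_nonneg _)
      _ = (2 * (w i * |y i| ^ p + w i * |y' i| ^ p)) * (w i * |y i - y' i| ^ p) := by ring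
      _ ≤ (2 * (w i * |y i| ^ p + w i * |y' i| ^ p)) * M := by
          apply mul_le_mul_of_nonneg_left (hMi i)
          have : 0 ≤ w i * |y i| ^ p + w i * |y' i| ^ p := by positivity
          linarith
      _ = 2 * (w i * |y i| ^ p + w i * |y' i| ^ p) * M := by ring
  calc ∑ i, (w i) ^ 2 * (|y i| ^ p - |y' i| ^ p) ^ 2
      ≤ ∑ i, 2 * (w i * |y i| ^ p + w i * |y' i| ^ p) * M :=
        Finset.sum_le_sum fun i _ => hterm i
    _ = 2 * ((∑ i, w i * |y i| ^ p) + ∑ i, w i * |y' i| ^ p) * M := by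
        rw [← Finset.sum_mul, ← Finset.mul_sum, Finset.sum_add_distrib]
end

section
/- Let p ∈ [1, 2], let m ≥ 1, let w ∈ ℝ^m be a weight vector with w_i ≥ 1 for all i, let h(r) = (max{0,r})^p, and let y, y' ∈ ℝ^m. Then (∑_{i=1}^m w_i^2·(h(y_i) − h(y_i'))^2)^{1/2} ≤ ( 2·(∑_{i=1}^m w_i·h(y_i) + ∑_{i=1}^m w_i·h(y_i')) · max_{i ∈ [m]} w_i·| max{0,y_i} − max{0,y_i'} |^p )^{1/2}. -/
lemma aux_sub (q : ℝ) (hq0 : 0 ≤ q) (hq1 : q ≤ 1) {a b : ℝ} (hb : 0 ≤ b) (hba : b ≤ a) :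
    a ^ q ≤ (a - b) ^ q + b ^ q := by
  have h := NNReal.rpow_add_le_add_rpow (Real.toNNReal (a - b)) (Real.toNNReal b) hq0 hq1
  have h' := NNReal.coe_le_coe.mpr h
  rw [← Real.toNNReal_add (by linarith) hb] at h'
  simp only [NNReal.coe_rpow, Real.coe_toNNReal _ (by linarith : (0:ℝ) ≤ a - b + b),
    Real.coe_toNNReal _ (by linarith : (0:ℝ) ≤ a - b), Real.coe_toNNReal _ hb] at h'
  push_cast at h'
  rw [Real.coe_toNNReal _ (by linarith : (0:ℝ) ≤ a - b), Real.coe_toNNReal _ hb] at h'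
  rw [show a - b + b = a by ring] at h'
  exact h'

lemma key_pt (p : ℝ) (hp1 : 1 ≤ p) (hp2 : p ≤ 2) {a b : ℝ} (ha : 0 ≤ a) (hb : 0 ≤ b) :
    (a ^ p - b ^ p) ^ 2 ≤ 2 * (a ^ p + b ^ p) * |a - b| ^ p := by
  wlog hab : b ≤ a generalizing a b
  · have := this hb ha (le_of_not_ge hab)
    rw [abs_sub_comm] at this
    nlinarith [this]
  set q := p / 2 with hqdef
  have hq0 : 0 ≤ q := by positivity
  have hq1 : q ≤ 1 := by rw [hqdef]; linarith
  have hsq : ∀ x : ℝ, 0 ≤ x → x ^ p = (x ^ q) ^ 2 := by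
    intro x hx
    rw [← Real.rpow_natCast (x ^ q) 2, ← Real.rpow_mul hx]
    norm_num [hqdef]
  have habs : |a - b| = a - b := abs_of_nonneg (by linarith)
  have h1 : a ^ q - b ^ q ≤ (a - b) ^ q := by
    have := aux_sub q hq0 hq1 hb hab; linarith
  have h2 : b ^ q ≤ a ^ q := Real.rpow_le_rpow hb hab hq0
  have haq : 0 ≤ a ^ q := Real.rpow_nonneg ha q
  have hbq : 0 ≤ b ^ q := Real.rpow_nonneg hb q
  have hdq : 0 ≤ (a - b) ^ q := Real.rpow_nonneg (by linarith) q
  rw [hsq a ha, hsq b hb, habs, hsq (a - b) (by linarith)]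
  have e1 : (a ^ q - b ^ q) ^ 2 ≤ ((a - b) ^ q) ^ 2 :=
    pow_le_pow_left₀ (by linarith) h1 2
  have e2 : (a ^ q + b ^ q) ^ 2 ≤ 2 * ((a ^ q) ^ 2 + (b ^ q) ^ 2) := by nlinarith [sq_nonneg (a ^ q - b ^ q)]
  nlinarith [mul_le_mul e1 e2 (by positivity) (by positivity)]


/-- Weighted bound for `h(r) = (max 0 r)^p`, `p ∈ [1,2]`. -/
theorem stmt7 (p : ℝ) (hp1 : 1 ≤ p) (hp2 : p ≤ 2) (m : ℕ) (hm : 0 < m)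
    (w : Fin m → ℝ) (hw : ∀ i, 1 ≤ w i) (y y' : Fin m → ℝ) :
    Real.sqrt (∑ i, (w i) ^ 2 * ((max 0 (y i)) ^ p - (max 0 (y' i)) ^ p) ^ 2) ≤
      Real.sqrt (2 * ((∑ i, w i * (max 0 (y i)) ^ p) + ∑ i, w i * (max 0 (y' i)) ^ p) *
        Finset.univ.sup' (Finset.univ_nonempty_iff.mpr ⟨⟨0, hm⟩⟩)
          (fun i => w i * |max 0 (y i) - max 0 (y' i)| ^ p)) := by
  apply Real.sqrt_le_sqrt
  set f : Fin m → ℝ := fun i => w i * |max 0 (y i) - max 0 (y' i)| ^ p with hf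
  set M := Finset.univ.sup' (Finset.univ_nonempty_iff.mpr ⟨⟨0, hm⟩⟩) f with hM
  have hMle : ∀ i : Fin m, f i ≤ M := fun i => Finset.le_sup' f (Finset.mem_univ i)
  have hM0 : 0 ≤ M := le_trans (by
    have := hw ⟨0, hm⟩
    have : 0 ≤ f ⟨0, hm⟩ := mul_nonneg (by linarith) (Real.rpow_nonneg (abs_nonneg _) p)
    exact this) (hMle ⟨0, hm⟩)
  have step : ∀ i : Fin m,
      (w i) ^ 2 * ((max 0 (y i)) ^ p - (max 0 (y' i)) ^ p) ^ 2 ≤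
        2 * (w i * (max 0 (y i)) ^ p + w i * (max 0 (y' i)) ^ p) * M := by
    intro i
    have hwi : 0 ≤ w i := le_trans zero_le_one (hw i)
    have hk := key_pt p hp1 hp2 (le_max_left 0 (y i)) (le_max_left 0 (y' i))
    have hfi := hMle i
    have hA : 0 ≤ (max 0 (y i)) ^ p := Real.rpow_nonneg (le_max_left _ _) p
    have hB : 0 ≤ (max 0 (y' i)) ^ p := Real.rpow_nonneg (le_max_left _ _) p
    have habs : 0 ≤ |max 0 (y i) - max 0 (y' i)| ^ p := Real.rpow_nonneg (abs_nonneg _) p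
    calc (w i) ^ 2 * ((max 0 (y i)) ^ p - (max 0 (y' i)) ^ p) ^ 2
        ≤ (w i) ^ 2 * (2 * ((max 0 (y i)) ^ p + (max 0 (y' i)) ^ p) *
            |max 0 (y i) - max 0 (y' i)| ^ p) := by
          exact mul_le_mul_of_nonneg_left hk (sq_nonneg _)
      _ = 2 * (w i * (max 0 (y i)) ^ p + w i * (max 0 (y' i)) ^ p) * f i := by
          rw [hf]; ring
      _ ≤ 2 * (w i * (max 0 (y i)) ^ p + w i * (max 0 (y' i)) ^ p) * M := by
          apply mul_le_mul_of_nonneg_left hfi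
          positivity
  calc (∑ i, (w i) ^ 2 * ((max 0 (y i)) ^ p - (max 0 (y' i)) ^ p) ^ 2)
      ≤ ∑ i, 2 * (w i * (max 0 (y i)) ^ p + w i * (max 0 (y' i)) ^ p) * M :=
        Finset.sum_le_sum fun i _ => step i
    _ = 2 * ((∑ i, w i * (max 0 (y i)) ^ p) + ∑ i, w i * (max 0 (y' i)) ^ p) * M := by
        rw [← Finset.sum_mul, ← Finset.mul_sum, Finset.sum_add_distrib]
end

section
/- Let p ∈ [1, 2], let m ≥ 1, let w ∈ ℝ^m be a weight vector with w_i ≥ 1 for all i, and let h be either h(r) = |r|^p or h(r) = (max{0,r})^p. Let G, σ > 0 and let y, y' ∈ ℝ^m satisfy ∑_{i=1}^m w_i·h(y_i) ≤ G, ∑_{i=1}^m w_i·h(y_i') ≤ G, max_{i∈[m]} w_i·|y_i|^p ≤ σ, and max_{i∈[m]} w_i·|y_i'|^p ≤ σ. Then d_X(y, y') ≤ 4·(G·σ)^{1/2}, where d_X(y, y') = (∑_{i=1}^m w_i^2·(h(y_i) − h(y_i'))^2)^{1/2}. -/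
/-- Diameter bound `d_X(y,y') ≤ 4·(G·σ)^{1/2}` for `h(r)=|r|^p` or `h(r)=(max 0 r)^p`,
with weighted losses bounded by `G` and weighted `ℓ_∞`-of-`p` functionals bounded by `σ`. -/
theorem stmt8 (p : ℝ) (hp1 : 1 ≤ p) (hp2 : p ≤ 2) (m : ℕ) (hm : 0 < m)
    (w : Fin m → ℝ) (hw : ∀ i, 1 ≤ w i)
    (h : ℝ → ℝ) (hh : (∀ r, h r = |r| ^ p) ∨ ∀ r, h r = (max 0 r) ^ p)
    (G σ : ℝ) (hG : 0 < G) (hσ : 0 < σ) (y y' : Fin m → ℝ)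
    (hyG : ∑ i, w i * h (y i) ≤ G) (hy'G : ∑ i, w i * h (y' i) ≤ G)
    (hyσ : ∀ i, w i * |y i| ^ p ≤ σ) (hy'σ : ∀ i, w i * |y' i| ^ p ≤ σ) :
    Real.sqrt (∑ i, (w i) ^ 2 * (h (y i) - h (y' i)) ^ 2) ≤ 4 * Real.sqrt (G * σ) := by
  have hp0 : 0 ≤ p := le_trans zero_le_one hp1
  have hnn : ∀ r, 0 ≤ h r := by
    rcases hh with hh | hh <;> intro r <;> rw [hh r]
    · exact Real.rpow_nonneg (abs_nonneg r) p
    · exact Real.rpow_nonneg (le_max_left 0 r) p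
  have hle : ∀ r, h r ≤ |r| ^ p := by
    rcases hh with hh | hh <;> intro r <;> rw [hh r]
    · exact Real.rpow_le_rpow (le_max_left 0 r) (max_le (abs_nonneg r) (le_abs_self r)) hp0
  have hwpos : ∀ i, 0 < w i := fun i => lt_of_lt_of_le one_pos (hw i)
  have hyσ' : ∀ i, w i * h (y i) ≤ σ := fun i =>
    le_trans (mul_le_mul_of_nonneg_left (hle (y i)) (hwpos i).le) (hyσ i)
  have hy'σ' : ∀ i, w i * h (y' i) ≤ σ := fun i =>
    le_trans (mul_le_mul_of_nonneg_left (hle (y' i)) (hwpos i).le) (hy'σ i)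
  have key : ∀ i, (w i) ^ 2 * (h (y i) - h (y' i)) ^ 2
      ≤ 2 * σ * (w i * h (y i) + w i * h (y' i)) := by
    intro i
    have habs : |h (y i) - h (y' i)| ≤ h (y i) + h (y' i) :=
      abs_le.mpr ⟨by linarith [hnn (y i), hnn (y' i)], by linarith [hnn (y' i)]⟩
    have h1 : w i * |h (y i) - h (y' i)| ≤ 2 * σ := by
      calc w i * |h (y i) - h (y' i)| ≤ w i * (h (y i) + h (y' i)) :=
            mul_le_mul_of_nonneg_left habs (hwpos i).le
        _ = w i * h (y i) + w i * h (y' i) := by ring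
        _ ≤ 2 * σ := by linarith [hyσ' i, hy'σ' i]
    have h2 : w i * |h (y i) - h (y' i)| ≤ w i * h (y i) + w i * h (y' i) := by
      calc w i * |h (y i) - h (y' i)| ≤ w i * (h (y i) + h (y' i)) :=
            mul_le_mul_of_nonneg_left habs (hwpos i).le
        _ = _ := by ring
    calc (w i) ^ 2 * (h (y i) - h (y' i)) ^ 2
        = (w i * |h (y i) - h (y' i)|) * (w i * |h (y i) - h (y' i)|) := by
          rw [show (w i * |h (y i) - h (y' i)|) * (w i * |h (y i) - h (y' i)|)
            = w i ^ 2 * |h (y i) - h (y' i)| ^ 2 from by ring, sq_abs]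
      _ ≤ (2 * σ) * (w i * h (y i) + w i * h (y' i)) :=
          mul_le_mul h1 h2 (mul_nonneg (hwpos i).le (abs_nonneg _))
            (by positivity)
  have hsum : ∑ i, (w i) ^ 2 * (h (y i) - h (y' i)) ^ 2 ≤ 4 * (G * σ) := by
    calc ∑ i, (w i) ^ 2 * (h (y i) - h (y' i)) ^ 2
        ≤ ∑ i, 2 * σ * (w i * h (y i) + w i * h (y' i)) :=
          Finset.sum_le_sum (fun i _ => key i)
      _ = 2 * σ * ((∑ i, w i * h (y i)) + ∑ i, w i * h (y' i)) := by
          rw [← Finset.mul_sum, Finset.sum_add_distrib]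
      _ ≤ 2 * σ * (G + G) := by
          have := add_le_add hyG hy'G
          nlinarith
      _ = 4 * (G * σ) := by ring
  calc Real.sqrt (∑ i, (w i) ^ 2 * (h (y i) - h (y' i)) ^ 2)
      ≤ Real.sqrt (4 * (G * σ)) := Real.sqrt_le_sqrt hsum
    _ = 2 * Real.sqrt (G * σ) := by
        rw [show (4 : ℝ) * (G * σ) = 2 ^ 2 * (G * σ) by ring,
          Real.sqrt_mul (by positivity), Real.sqrt_sq (by norm_num)]
    _ ≤ 4 * Real.sqrt (G * σ) := by
        have := Real.sqrt_nonneg (G * σ); linarith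
end

section
/- Let 1 ≤ r ≤ q < ∞, let n ≥ 1, let w ∈ ℝ^n with w_i ≥ 1 for all i, and let t > 0. Suppose N ⊆ ℝ^n is a finite set such that for every y ∈ ℝ^n with ‖y‖_r ≤ 1 there exists x ∈ N with ‖y − x‖_q ≤ t. Then there exists a finite set N_w ⊆ ℝ^n with |N_w| ≤ |N| such that for every y' ∈ ℝ^n with ‖y'‖_{w,r} ≤ 1 (i.e., ∑_i w_i|y_i'|^r ≤ 1) there exists x' ∈ N_w with ‖y' − x'‖_{w,q} ≤ t (i.e., ∑_i w_i|y_i' − x_i'|^q ≤ t^q). In particular, the covering number of the weighted ℓ_r unit ball by weighted ℓ_q balls of radius t is at most the covering number of the unweighted ℓ_r unit ball by unweighted ℓ_q balls of radius t. -/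
/-- Covering-number transfer from unweighted to weighted balls: any `t`-cover of the
unweighted `ℓ_r` unit ball by `ℓ_q` balls yields a `t`-cover, of no larger cardinality,
of the weighted `ℓ_r` unit ball by weighted `ℓ_q` balls, for weights `w_i ≥ 1`. -/
theorem stmt15 (r q : ℝ) (hr : 1 ≤ r) (hrq : r ≤ q) (n : ℕ) (hn : 0 < n)
    (w : Fin n → ℝ) (hw : ∀ i, 1 ≤ w i) (t : ℝ) (ht : 0 < t)
    (N : Finset (Fin n → ℝ))
    (hN : ∀ y : Fin n → ℝ, (∑ i, |y i| ^ r) ≤ 1 →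
      ∃ x ∈ N, (∑ i, |y i - x i| ^ q) ≤ t ^ q) :
    ∃ Nw : Finset (Fin n → ℝ), Nw.card ≤ N.card ∧
      ∀ y' : Fin n → ℝ, (∑ i, w i * |y' i| ^ r) ≤ 1 →
        ∃ x' ∈ Nw, (∑ i, w i * |y' i - x' i| ^ q) ≤ t ^ q := by
  have hr0 : (0 : ℝ) < r := lt_of_lt_of_le one_pos hr
  have hrne : r ≠ 0 := ne_of_gt hr0
  set c : Fin n → ℝ := fun i => (w i) ^ (1 / r) with hc
  have hwpos : ∀ i, (0 : ℝ) < w i := fun i => lt_of_lt_of_le one_pos (hw i)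
  have hcpos : ∀ i, (0 : ℝ) < c i := fun i => Real.rpow_pos_of_pos (hwpos i) _
  have hcr : ∀ i, (c i) ^ r = w i := by
    intro i
    show (w i ^ (1 / r)) ^ r = w i
    rw [← Real.rpow_mul (le_of_lt (hwpos i)), one_div_mul_cancel hrne, Real.rpow_one]
  refine ⟨N.image (fun x i => (c i)⁻¹ * x i), Finset.card_image_le, ?_⟩
  intro y' hy'
  set y : Fin n → ℝ := fun i => c i * y' i with hy
  have hyr : (∑ i, |y i| ^ r) ≤ 1 := by
    have : ∀ i, |y i| ^ r = w i * |y' i| ^ r := by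
      intro i
      rw [hy, abs_mul, abs_of_pos (hcpos i),
        Real.mul_rpow (le_of_lt (hcpos i)) (abs_nonneg _), hcr i]
    simpa [this] using hy'
  obtain ⟨x, hxN, hx⟩ := hN y hyr
  refine ⟨fun i => (c i)⁻¹ * x i, Finset.mem_image_of_mem _ hxN, ?_⟩
  have key : ∀ i, w i * |y' i - (c i)⁻¹ * x i| ^ q ≤ |y i - x i| ^ q := by
    intro i
    have hdiff : y' i - (c i)⁻¹ * x i = (c i)⁻¹ * (y i - x i) := by
      field_simp [hy, ne_of_gt (hcpos i)]
      ring
    rw [hdiff, abs_mul, abs_of_pos (inv_pos.mpr (hcpos i)),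
      Real.mul_rpow (le_of_lt (inv_pos.mpr (hcpos i))) (abs_nonneg _)]
    have hinv : ((c i)⁻¹) ^ q = (w i) ^ (-(q / r)) := by
      show ((w i ^ (1 / r))⁻¹) ^ q = w i ^ (-(q / r))
      rw [← Real.rpow_neg_one, ← Real.rpow_mul (le_of_lt (hwpos i)),
        ← Real.rpow_mul (le_of_lt (hwpos i))]
      congr 1
      field_simp
    rw [hinv, ← mul_assoc]
    have hexp : w i * w i ^ (-(q / r)) = w i ^ (1 - q / r) := by
      have h12 : (1 : ℝ) - q / r = 1 + -(q / r) := by ring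
      rw [h12, Real.rpow_add (hwpos i), Real.rpow_one]
    rw [hexp]
    have h1 : w i ^ (1 - q / r) ≤ 1 := by
      apply Real.rpow_le_one_of_one_le_of_nonpos (hw i)
      have : 1 ≤ q / r := (one_le_div hr0).mpr hrq
      linarith
    calc w i ^ (1 - q / r) * |y i - x i| ^ q ≤ 1 * |y i - x i| ^ q :=
          mul_le_mul_of_nonneg_right h1 (Real.rpow_nonneg (abs_nonneg _) _)
      _ = |y i - x i| ^ q := one_mul _
  calc (∑ i, w i * |y' i - (c i)⁻¹ * x i| ^ q) ≤ ∑ i, |y i - x i| ^ q :=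
        Finset.sum_le_sum fun i _ => key i
    _ ≤ t ^ q := hx
end

section
/- Let n ≥ 1 be a real number and let m ∈ ℕ. If v ∈ ℝ^m satisfies ‖v‖_1 ≥ n/2 and ‖v‖_2^2 ≤ 2n, then m ≥ n/8. In particular, any reweighted matrix A' ∈ ℝ^{m×1} (without auxiliary weights) that preserves both the ℓ_1 norm and the squared ℓ_2 norm of the n×1 all-ones matrix at x = 1 up to a factor of 2 must have at least n/8 rows. -/
/-- Any `v ∈ ℝ^m` with `‖v‖_1 ≥ n/2` and `‖v‖_2^2 ≤ 2n` (for `n ≥ 1`) requires `m ≥ n/8`: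
no small unweighted reduction can preserve both the `ℓ_1` norm and the squared `ℓ_2`
norm of the all-ones vector up to a factor of 2. -/
theorem stmt17 (n : ℝ) (hn : 1 ≤ n) (m : ℕ) (v : Fin m → ℝ)
    (h1 : n / 2 ≤ ∑ i, |v i|) (h2 : ∑ i, (v i) ^ 2 ≤ 2 * n) :
    n / 8 ≤ m := by
  have hcs : (∑ i, |v i|) ^ 2 ≤ (Finset.univ.card : ℝ) * ∑ i, |v i| ^ 2 :=
    sq_sum_le_card_mul_sum_sq
  simp only [Finset.card_univ, Fintype.card_fin, sq_abs] at hcs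
  nlinarith [sq_nonneg (∑ i, |v i|)]
end
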